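/- Let (x̂(i))_{i∈ℕ} be a sequence of points of Ŝ_m converging to a point z with Q̂3(z) > 0 and n̂3(z) = 0. Then f_pre(x̂(i)) → −∞ as i → ∞. -/

import Mathlib

open Filter Topology

namespace Stmt13

/-- `f_k(x) = e^x − Σ_{i<k} x^i/i!`. -/
noncomputable def fpo (k : ℕ) (x : ℝ) : ℝ :=
  Real.exp x - ∑ i ∈ Finset.range k, x ^ i / (Nat.factorial i : ℝ)

/-- `h(y) = y·ln(y·n) − y`. -/
noncomputable def hfun (n y : ℝ) : ℝ := y * Real.log (y * n) - y

/-- The function `f_pre`, where `lam3 c` is the unique positive solution of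
`λ·f₂(λ)/f₃(λ) = c` (and `lam3 3 = 0`); at points with `Q̂₃ = 3·n̂₃` the last two terms
are replaced by `−n̂₃·ln 6` (the continuous extension). -/
noncomputable def fpre (n m : ℝ) (lam3 : ℝ → ℝ) (x1 k0 k1 k2 : ℝ) : ℝ :=
  let n2e : ℝ := k0 + k1 + k2
  let n3 : ℝ := 1 - x1 - n2e
  let m2 : ℝ := x1
  let m2' : ℝ := x1 - k0
  let P2 : ℝ := 2 * m2'
  let m3 : ℝ := m / n - x1
  let P3 : ℝ := 3 * m3
  let Q3 : ℝ := 3 * m / n - x1 - 2 * n2e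
  let T3 : ℝ := P3 - k1 - 2 * k2
  let T2 : ℝ := P2 - k1
  let c3 : ℝ := Q3 / n3
  hfun n P3 + hfun n P2 + hfun n Q3 + hfun n m2
    - hfun n k0 - hfun n k1 - hfun n k2 - hfun n n3 - hfun n m3
    - hfun n T3 - hfun n T2 - 2 * hfun n m2'
    - k2 * Real.log 2 - m2' * Real.log 2 - m3 * Real.log 6 +
    (if Q3 = 3 * n3 then -n3 * Real.log 6
     else n3 * Real.log (fpo 3 (lam3 c3)) - Q3 * Real.log (lam3 c3))

/-- `f_pre` as a function on quadruples. -/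
noncomputable def fpreP (n m : ℝ) (lam3 : ℝ → ℝ) (p : ℝ × ℝ × ℝ × ℝ) : ℝ :=
  fpre n m lam3 p.1 p.2.1 p.2.2.1 p.2.2.2

/-- The region `Ŝ_m ⊆ ℝ⁴`. -/
def Shat (n m : ℝ) : Set (ℝ × ℝ × ℝ × ℝ) :=
  {p | p.1 ∈ Set.Icc (0 : ℝ) 1 ∧ p.2.1 ∈ Set.Icc (0 : ℝ) 1 ∧
    p.2.2.1 ∈ Set.Icc (0 : ℝ) 1 ∧ p.2.2.2 ∈ Set.Icc (0 : ℝ) 1 ∧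
    3 * (1 - p.1 - (p.2.1 + p.2.2.1 + p.2.2.2))
      ≤ 3 * m / n - p.1 - 2 * (p.2.1 + p.2.2.1 + p.2.2.2) ∧
    0 ≤ 1 - p.1 - (p.2.1 + p.2.2.1 + p.2.2.2) ∧
    (1 - p.1 - (p.2.1 + p.2.2.1 + p.2.2.2) = 0 →
      3 * m / n - p.1 - 2 * (p.2.1 + p.2.2.1 + p.2.2.2) = 0) ∧
    0 ≤ m / n - p.1 ∧ 0 ≤ p.1 ∧ 0 ≤ p.1 - p.2.1 ∧
    0 ≤ 3 * (m / n - p.1) - p.2.2.1 - 2 * p.2.2.2 ∧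
    0 ≤ 2 * (p.1 - p.2.1) - p.2.2.1}

/-!
Write `Q = Q̂₃` and `N = n̂₃`. All terms of `f_pre` except `N·ln f₃(λ) − Q·ln λ` are continuous on
`ℝ⁴`, hence bounded near `z`. From `λ f₂(λ) = c f₃(λ)` and `f₂(λ) = f₃(λ) + λ²/2` one gets
`(c − λ) f₃(λ) = λ³/2`, and `f₃(λ) ≥ λ³/6` then gives `c − 3 ≤ λ ≤ c`. With `ln f₃(λ) ≤ λ` this
bounds the `λ`-terms by `Q (1 − ln (Q/N − 3))`, which tends to `−∞` because `Q → Q̂₃(z) > 0`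
while `N ↓ 0`.
-/

lemma fpo_two_eq (x : ℝ) : fpo 2 x = fpo 3 x + x ^ 2 / 2 := by
  simp only [fpo, Finset.sum_range_succ, Finset.sum_range_zero]
  norm_num [Nat.factorial]
  ring

lemma pow_three_div_six_le_fpo_three {x : ℝ} (hx : 0 ≤ x) : x ^ 3 / 6 ≤ fpo 3 x := by
  have h := Real.sum_le_exp_of_nonneg hx 4
  simp only [fpo, Finset.sum_range_succ, Finset.sum_range_zero] at h ⊢
  norm_num [Nat.factorial] at h ⊢
  linarith

lemma fpo_three_pos {x : ℝ} (hx : 0 < x) : 0 < fpo 3 x :=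
  (by positivity : 0 < x ^ 3 / 6).trans_le (pow_three_div_six_le_fpo_three hx.le)

lemma fpo_three_le_exp {x : ℝ} (hx : 0 ≤ x) : fpo 3 x ≤ Real.exp x := by
  simp only [fpo, Finset.sum_range_succ, Finset.sum_range_zero]
  norm_num [Nat.factorial]
  positivity

lemma log_fpo_three_le {x : ℝ} (hx : 0 < x) : Real.log (fpo 3 x) ≤ x :=
  (Real.log_le_log (fpo_three_pos hx) (fpo_three_le_exp hx.le)).trans_eq (Real.log_exp x)

lemma sub_three_le_and_le_of_mul_fpo_two_div_fpo_three_eq {l c : ℝ} (hl : 0 < l)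
    (h : l * fpo 2 l / fpo 3 l = c) : c - 3 ≤ l ∧ l ≤ c := by
  have hf3 := fpo_three_pos hl
  have hcube := pow_three_div_six_le_fpo_three hl.le
  have key : (c - l) * fpo 3 l = l ^ 3 / 2 := by
    rw [← h, fpo_two_eq]
    field_simp
    ring
  constructor <;> nlinarith [pow_pos hl 3]

@[fun_prop]
lemma continuous_hfun (n : ℝ) : Continuous (hfun n) := by
  rcases eq_or_ne n 0 with rfl | hn
  · have h : hfun 0 = fun y => -y := by
      funext y
      simp [hfun]
    rw [h]
    exact continuous_neg
  · have h : hfun n = fun y => y * n * Real.log (y * n) / n - y := by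
      funext y
      simp only [hfun]
      field_simp
    rw [h]
    exact ((Real.continuous_mul_log.comp (by fun_prop)).div_const n).sub continuous_id

noncomputable def Q3 (n m : ℝ) (p : ℝ × ℝ × ℝ × ℝ) : ℝ :=
  3 * m / n - p.1 - 2 * (p.2.1 + p.2.2.1 + p.2.2.2)

noncomputable def n3 (p : ℝ × ℝ × ℝ × ℝ) : ℝ := 1 - p.1 - (p.2.1 + p.2.2.1 + p.2.2.2)

noncomputable def fpreBase (n m : ℝ) (p : ℝ × ℝ × ℝ × ℝ) : ℝ :=
  hfun n (3 * (m / n - p.1)) + hfun n (2 * (p.1 - p.2.1)) + hfun n (Q3 n m p) + hfun n p.1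
    - hfun n p.2.1 - hfun n p.2.2.1 - hfun n p.2.2.2 - hfun n (n3 p) - hfun n (m / n - p.1)
    - hfun n (3 * (m / n - p.1) - p.2.2.1 - 2 * p.2.2.2) - hfun n (2 * (p.1 - p.2.1) - p.2.2.1)
    - 2 * hfun n (p.1 - p.2.1)
    - p.2.2.2 * Real.log 2 - (p.1 - p.2.1) * Real.log 2 - (m / n - p.1) * Real.log 6

lemma fpreP_eq (n m : ℝ) (lam3 : ℝ → ℝ) (p : ℝ × ℝ × ℝ × ℝ) :
    fpreP n m lam3 p = fpreBase n m p +
      (if Q3 n m p = 3 * n3 p then -n3 p * Real.log 6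
       else n3 p * Real.log (fpo 3 (lam3 (Q3 n m p / n3 p)))
         - Q3 n m p * Real.log (lam3 (Q3 n m p / n3 p))) := rfl

lemma continuous_Q3 (n m : ℝ) : Continuous (Q3 n m) := by
  unfold Q3
  fun_prop

lemma continuous_n3 : Continuous n3 := by
  unfold n3
  fun_prop

lemma continuous_fpreBase (n m : ℝ) : Continuous (fpreBase n m) := by
  unfold fpreBase Q3 n3
  fun_prop

lemma n3_pos_of_mem_Shat {n m : ℝ} {p : ℝ × ℝ × ℝ × ℝ} (hp : p ∈ Shat n m)
    (hQ : 0 < Q3 n m p) : 0 < n3 p := by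
  obtain ⟨-, -, -, -, -, hN, hNQ, -⟩ := hp
  exact hN.lt_of_ne fun h => hQ.ne' (hNQ h.symm)

lemma mul_log_fpo_three_sub_mul_log_le {N Q l : ℝ} (hN : 0 < N) (hQ : 0 ≤ Q) (hc : 3 < Q / N) (hl : 0 < l)
    (hlc : l * fpo 2 l / fpo 3 l = Q / N) :
    N * Real.log (fpo 3 l) - Q * Real.log l ≤ Q * (1 - Real.log (Q / N - 3)) := by
  obtain ⟨hlb, hub⟩ := sub_three_le_and_le_of_mul_fpo_two_div_fpo_three_eq hl hlc
  calc N * Real.log (fpo 3 l) - Q * Real.log l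
      ≤ N * (Q / N) - Q * Real.log (Q / N - 3) := by
        gcongr
        exact (log_fpo_three_le hl).trans hub
    _ = Q * (1 - Real.log (Q / N - 3)) := by
        field_simp

lemma fpreP_le_of_three_lt_Q3_div_n3 {n m : ℝ} {lam3 : ℝ → ℝ}
    (hlam3 : ∀ c : ℝ, 3 < c → 0 < lam3 c ∧ lam3 c * fpo 2 (lam3 c) / fpo 3 (lam3 c) = c)
    {p : ℝ × ℝ × ℝ × ℝ} (hN : 0 < n3 p) (hc : 3 < Q3 n m p / n3 p) :
    fpreP n m lam3 p ≤ fpreBase n m p + Q3 n m p * (1 - Real.log (Q3 n m p / n3 p - 3)) := by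
  have hQ : 3 * n3 p < Q3 n m p := (lt_div_iff₀ hN).1 hc
  obtain ⟨hl, hlc⟩ := hlam3 _ hc
  rw [fpreP_eq, if_neg hQ.ne']
  gcongr
  exact mul_log_fpo_three_sub_mul_log_le hN (by linarith) hc hl hlc

lemma tendsto_mul_one_sub_log_sub_three_atBot {α : Type*} {l : Filter α} {Q c : α → ℝ}
    {q : ℝ} (hq : 0 < q) (hQ : Tendsto Q l (𝓝 q)) (hc : Tendsto c l atTop) :
    Tendsto (fun i => Q i * (1 - Real.log (c i - 3))) l atBot := by
  have hlog : Tendsto (fun i => Real.log (c i - 3)) l atTop :=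
    Real.tendsto_log_atTop.comp (tendsto_atTop_add_const_right l (-3) hc)
  refine hQ.pos_mul_atBot hq ?_
  simpa only [sub_eq_add_neg, Function.comp_def] using
    tendsto_atBot_add_const_left l 1 (tendsto_neg_atTop_atBot.comp hlog)

theorem stmt13_general (n m : ℕ)
    (lam3 : ℝ → ℝ)
    (hlam3 : ∀ c : ℝ, 3 < c → 0 < lam3 c ∧
      lam3 c * fpo 2 (lam3 c) / fpo 3 (lam3 c) = c)
    (x : ℕ → ℝ × ℝ × ℝ × ℝ) (hx : ∀ i, x i ∈ Shat n m)
    (z : ℝ × ℝ × ℝ × ℝ) (hconv : Tendsto x atTop (𝓝 z))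
    (hQ3 : 0 < 3 * (m : ℝ) / n - z.1 - 2 * (z.2.1 + z.2.2.1 + z.2.2.2))
    (hn3 : 1 - z.1 - (z.2.1 + z.2.2.1 + z.2.2.2) = 0) :
    Tendsto (fun i => fpreP n m lam3 (x i)) atTop atBot := by
  have hQ : Tendsto (fun i => Q3 n m (x i)) atTop (𝓝 (Q3 n m z)) :=
    ((continuous_Q3 n m).tendsto z).comp hconv
  have hN : Tendsto (fun i => n3 (x i)) atTop (𝓝 0) :=
    hn3 ▸ (continuous_n3.tendsto z).comp hconv
  have hNpos : ∀ᶠ i in atTop, 0 < n3 (x i) :=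
    (hQ.eventually (eventually_gt_nhds hQ3)).mono fun i => n3_pos_of_mem_Shat (hx i)
  have hc : Tendsto (fun i => Q3 n m (x i) / n3 (x i)) atTop atTop := by
    simpa only [div_eq_mul_inv, Pi.inv_apply] using
      hQ.pos_mul_atTop hQ3 (tendsto_nhdsWithin_iff.2 ⟨hN, hNpos⟩).inv_tendsto_nhdsGT_zero
  have hbase : ∀ᶠ i in atTop, fpreBase n m (x i) ≤ fpreBase n m z + 1 :=
    ((continuous_fpreBase n m).tendsto z).comp hconv |>.eventually
      (eventually_le_nhds (lt_add_one _))
  refine tendsto_atBot_mono' atTop ?_ (tendsto_atBot_add_left_of_ge' atTop _ hbase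
    (tendsto_mul_one_sub_log_sub_three_atBot hQ3 hQ hc))
  filter_upwards [hNpos, hc.eventually_gt_atTop 3] with i hNi hci
  exact fpreP_le_of_three_lt_Q3_div_n3 hlam3 hNi hci

/-- If a sequence of points of `Ŝ_m` converges to a point `z` with `Q̂₃(z) > 0` and
`n̂₃(z) = 0`, then `f_pre` tends to `−∞` along the sequence. -/
theorem stmt13 (n m : ℕ) (hn : 0 < n)
    (lam3 : ℝ → ℝ)
    (hlam3 : ∀ c : ℝ, 3 < c → 0 < lam3 c ∧
      lam3 c * fpo 2 (lam3 c) / fpo 3 (lam3 c) = c)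
    (hlam3' : lam3 3 = 0)
    (x : ℕ → ℝ × ℝ × ℝ × ℝ) (hx : ∀ i, x i ∈ Shat n m)
    (z : ℝ × ℝ × ℝ × ℝ) (hconv : Tendsto x atTop (𝓝 z))
    (hQ3 : 0 < 3 * (m : ℝ) / n - z.1 - 2 * (z.2.1 + z.2.2.1 + z.2.2.2))
    (hn3 : 1 - z.1 - (z.2.1 + z.2.2.1 + z.2.2.2) = 0) :
    Tendsto (fun i => fpreP n m lam3 (x i)) atTop atBot :=
  stmt13_general n m lam3 hlam3 x hx z hconv hQ3 hn3

end Stmt13
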